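/- arXiv:2304.03806 — 5 statements merged into one kernel-verified Lean document; each statement's English description precedes it below -/
import Mathlib

section
/- Let ε, η > 0 and 𝒜 = exp(-εη/2). Then for every smooth function ψ : ℝ → ℂ and every x ∈ ℝ: ½·(L₀†([Q∘Q, L₀]ψ))(x) + ½·(([L₀†, Q∘Q])(L₀ψ))(x) = ε²𝒜²·ψ(x) - 2ε𝒜·x·sin(ηx)·ψ(x). -/
open Complex

/-- Position operator `(Qψ)(x) = x·ψ(x)`. -/
noncomputable def Qop : (ℝ → ℂ) → (ℝ → ℂ) := fun ψ x => (x : ℂ) * ψ x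

/-- Lindblad operator `L₀ = 𝒜 e^{iηq}(1-εp) - 1` realized on smooth functions. -/
noncomputable def L0 (ε η : ℝ) : (ℝ → ℂ) → (ℝ → ℂ) := fun ψ x =>
  (Real.exp (-(ε * η / 2)) : ℂ) * Complex.exp (Complex.I * η * x) *
    (ψ x + Complex.I * ε * deriv ψ x) - ψ x

/-- Formal adjoint `L₀†` of `L₀`. -/
noncomputable def L0d (ε η : ℝ) : (ℝ → ℂ) → (ℝ → ℂ) := fun ψ x =>
  (Real.exp (-(ε * η / 2)) : ℂ) * Complex.exp (-(Complex.I * η * x)) *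
    (((1 : ℂ) + ε * η) * ψ x + Complex.I * ε * deriv ψ x) - ψ x

/-- Commutator of two operators on functions. -/
noncomputable def opComm (A B : (ℝ → ℂ) → (ℝ → ℂ)) : (ℝ → ℂ) → (ℝ → ℂ) :=
  fun ψ => A (B ψ) - B (A ψ)

section Aux

open Complex

variable (ε η : ℝ) (ψ : ℝ → ℂ)

private lemma hasDerivAt_coe (x : ℝ) : HasDerivAt (fun y : ℝ => (y : ℂ)) 1 x := by
  simpa using (hasDerivAt_id x).ofReal_comp

private lemma hasDerivAt_E (x : ℝ) :
    HasDerivAt (fun y : ℝ => Complex.exp (Complex.I * η * y))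
      (Complex.I * η * Complex.exp (Complex.I * η * x)) x := by
  have h := ((hasDerivAt_coe x).const_mul (Complex.I * η)).cexp
  simpa [mul_comm] using h

private lemma comm1 (hψ : ContDiff ℝ (⊤ : ℕ∞) ψ) :
    opComm (Qop ∘ Qop) (L0 ε η) ψ = fun y : ℝ =>
      -2 * Complex.I * ε * (Real.exp (-(ε * η / 2)) : ℂ) * y *
        Complex.exp (Complex.I * η * y) * ψ y := by
  have hd1 : Differentiable ℝ ψ := (hψ.of_le (by exact_mod_cast le_top)).differentiable (by simp : ((⊤ : ℕ∞) : WithTop ℕ∞) ≠ 0)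
  funext y
  have hψy : HasDerivAt ψ (deriv ψ y) y := (hd1 y).hasDerivAt
  have hQQ : HasDerivAt (fun z : ℝ => (z : ℂ) * ((z : ℂ) * ψ z))
      (1 * ((y : ℂ) * ψ y) + (y : ℂ) * (1 * ψ y + (y : ℂ) * deriv ψ y)) y :=
    (hasDerivAt_coe y).mul ((hasDerivAt_coe y).mul hψy)
  simp only [opComm, Qop, L0, Function.comp, Pi.sub_apply,
    show Qop (Qop ψ) = fun z : ℝ => ((z : ℂ) * ((z : ℂ) * ψ z)) from rfl]
  rw [hQQ.deriv]
  ring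

end Aux

theorem dissipator_q_squared (ε η : ℝ) (hε : 0 < ε) (hη : 0 < η)
    (ψ : ℝ → ℂ) (hψ : ContDiff ℝ (⊤ : ℕ∞) ψ) (x : ℝ) :
    (1 / 2 : ℂ) * L0d ε η (opComm (Qop ∘ Qop) (L0 ε η) ψ) x +
      (1 / 2 : ℂ) * opComm (L0d ε η) (Qop ∘ Qop) (L0 ε η ψ) x =
      ((ε : ℂ) ^ 2 * (Real.exp (-(ε * η / 2)) : ℂ) ^ 2) * ψ x -
        2 * ε * (Real.exp (-(ε * η / 2)) : ℂ) * x * (Real.sin (η * x) : ℂ) * ψ x := by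
  have h1 : ContDiff ℝ (((⊤ : ℕ∞)) : WithTop ℕ∞) ψ := hψ.of_le (by simp)
  have hd1 : Differentiable ℝ ψ := h1.differentiable (by simp)
  have hd2 : Differentiable ℝ (deriv ψ) :=
    (contDiff_infty_iff_deriv.mp h1).2.differentiable (by simp)
  have hψx : HasDerivAt ψ (deriv ψ x) x := (hd1 x).hasDerivAt
  have hψ'x : HasDerivAt (deriv ψ) (deriv (deriv ψ) x) x := (hd2 x).hasDerivAt
  set A : ℂ := (Real.exp (-(ε * η / 2)) : ℂ) with hA
  -- derivative of the first commutator function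
  have hF : HasDerivAt (fun y : ℝ => -2 * Complex.I * (ε : ℂ) * A * (y : ℂ) *
      Complex.exp (Complex.I * η * y) * ψ y)
      ((-2 * Complex.I * (ε : ℂ) * A * 1 * Complex.exp (Complex.I * η * x) +
        -2 * Complex.I * (ε : ℂ) * A * (x : ℂ) * (Complex.I * η * Complex.exp (Complex.I * η * x))) * ψ x +
        -2 * Complex.I * (ε : ℂ) * A * (x : ℂ) * Complex.exp (Complex.I * η * x) * deriv ψ x) x := by
    exact (((hasDerivAt_coe x).const_mul (-2 * Complex.I * (ε : ℂ) * A)).mul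
      (hasDerivAt_E η x)).mul hψx
  -- derivative of L0 ψ
  have hu : HasDerivAt (L0 ε η ψ)
      ((A * (Complex.I * η * Complex.exp (Complex.I * η * x))) *
        (ψ x + Complex.I * (ε : ℂ) * deriv ψ x) +
        A * Complex.exp (Complex.I * η * x) *
          (deriv ψ x + Complex.I * (ε : ℂ) * deriv (deriv ψ) x) - deriv ψ x) x := by
    exact (((hasDerivAt_E η x).const_mul A).mul
      (hψx.add (hψ'x.const_mul (Complex.I * (ε : ℂ))))).sub hψx
  have hQQu : HasDerivAt (fun z : ℝ => (z : ℂ) * ((z : ℂ) * L0 ε η ψ z))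
      (1 * ((x : ℂ) * L0 ε η ψ x) + (x : ℂ) * (1 * L0 ε η ψ x + (x : ℂ) *
        ((A * (Complex.I * η * Complex.exp (Complex.I * η * x))) *
        (ψ x + Complex.I * (ε : ℂ) * deriv ψ x) +
        A * Complex.exp (Complex.I * η * x) *
          (deriv ψ x + Complex.I * (ε : ℂ) * deriv (deriv ψ) x) - deriv ψ x))) x :=
    (hasDerivAt_coe x).mul ((hasDerivAt_coe x).mul hu)
  rw [comm1 ε η ψ hψ]
  simp only [opComm, Pi.sub_apply, Function.comp, L0d,
    show Qop (Qop (L0 ε η ψ)) = fun z : ℝ => ((z : ℂ) * ((z : ℂ) * L0 ε η ψ z)) from rfl,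
    show Qop = fun (f : ℝ → ℂ) (y : ℝ) => (y : ℂ) * f y from rfl]
  rw [hF.deriv, hQQu.deriv, hu.deriv]
  simp only [L0]
  have hsin : ((Real.sin (η * x) : ℝ) : ℂ) =
      (Complex.exp (-(Complex.I * η * x)) - Complex.exp (Complex.I * η * x)) * Complex.I / 2 := by
    rw [Complex.ofReal_sin, Complex.sin,
      show -(((η * x : ℝ)) : ℂ) * Complex.I = -(Complex.I * η * x) by push_cast; ring,
      show (((η * x : ℝ)) : ℂ) * Complex.I = Complex.I * η * x by push_cast; ring]
  rw [hsin, Complex.exp_neg, hA]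
  simp only [Complex.ofReal_exp, Complex.ofReal_neg, Complex.ofReal_div, Complex.ofReal_mul,
    Complex.ofReal_ofNat]
  have hc : Complex.exp (Complex.I * η * x) ≠ 0 := Complex.exp_ne_zero _
  field_simp
  linear_combination (-2 * cexp (-((ε : ℂ) * (η : ℂ) / 2)) ^ 2 * cexp ((η : ℂ) * I * (x : ℂ)) * I * ψ x * (ε : ℂ) ^ 2 * (η : ℂ) * (x : ℂ) +
    -2 * cexp (-((ε : ℂ) * (η : ℂ) / 2)) ^ 2 * cexp ((η : ℂ) * I * (x : ℂ)) * ψ x * (ε : ℂ) ^ 2) * Complex.I_sq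
end

section
/- Let ε, η > 0 and 𝒜 = exp(-εη/2). Then for every smooth function ψ : ℝ → ℂ and every x ∈ ℝ: ½·(L₀†([P∘P, L₀]ψ))(x) + ½·(([L₀†, P∘P])(L₀ψ))(x) = η²𝒜²·ψ(x) + 2η(1-εη)𝒜²·(Pψ)(x) - εη(4-εη)𝒜²·(P(Pψ))(x) + 2ε²η𝒜²·(P(P(Pψ)))(x) + (εη³/2)·𝒜·cos(ηx)·ψ(x) + 2εη𝒜·(P(cos(η·)·Pψ))(x) - η(2+εη)·𝒜·cos(ηx)·(Pψ)(x) - i·(η²/2)·(2+εη)·𝒜·sin(ηx)·ψ(x). -/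
open Complex

/-- Momentum operator `(Pψ)(x) = -i·ψ'(x)`. -/
noncomputable def Pop : (ℝ → ℂ) → (ℝ → ℂ) := fun ψ x => -Complex.I * deriv ψ x

/- ### Auxiliary machinery -/

lemma hasDerivAt_cexp_lin (c : ℂ) (x : ℝ) :
    HasDerivAt (fun y : ℝ => Complex.exp (c * y)) (c * Complex.exp (c * x)) x := by
  have h1 : HasDerivAt (fun y : ℝ => (y : ℂ)) 1 x := by
    simpa using (hasDerivAt_id x).ofReal_comp
  have h2 := (h1.const_mul c).cexp
  convert h2 using 1
  ring

lemma hasDerivAt_cexp_neg (c : ℂ) (x : ℝ) :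
    HasDerivAt (fun y : ℝ => Complex.exp (-(c * y))) (-(c * Complex.exp (-(c * x)))) x := by
  simpa [neg_mul] using hasDerivAt_cexp_lin (-c) x

lemma I_cube : Complex.I ^ 3 = -Complex.I := by
  rw [pow_succ, Complex.I_sq, neg_one_mul]

lemma I_four : Complex.I ^ 4 = 1 := by
  rw [show (4:ℕ) = 2*2 from rfl, pow_mul, Complex.I_sq, neg_one_sq]

lemma popPop (χ χ2 : ℝ → ℂ) (h : ∀ y : ℝ, HasDerivAt (deriv χ) (χ2 y) y) :
    (Pop ∘ Pop) χ = fun y => -(χ2 y) := by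
  funext y
  show -Complex.I * deriv (fun z => -Complex.I * deriv χ z) y = _
  rw [((h y).const_mul (-Complex.I)).deriv]
  ring_nf
  simp only [Complex.I_sq]
  ring

/-- First derivative of `L0 ε η ψ`. -/
noncomputable def U1 (ε η : ℝ) (ψ : ℝ → ℂ) : ℝ → ℂ := fun y =>
  (Real.exp (-(ε * η / 2)) : ℂ) * Complex.exp (Complex.I * η * y) *
    (Complex.I * η * ψ y + (1 - (ε : ℂ) * η) * deriv ψ y
      + Complex.I * ε * deriv (deriv ψ) y) - deriv ψ y

/-- Second derivative of `L0 ε η ψ`. -/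
noncomputable def U2 (ε η : ℝ) (ψ : ℝ → ℂ) : ℝ → ℂ := fun y =>
  (Real.exp (-(ε * η / 2)) : ℂ) * Complex.exp (Complex.I * η * y) *
    (-(η : ℂ) ^ 2 * ψ y + Complex.I * η * (2 - (ε : ℂ) * η) * deriv ψ y
      + (1 - 2 * (ε : ℂ) * η) * deriv (deriv ψ) y
      + Complex.I * ε * deriv (deriv (deriv ψ)) y) - deriv (deriv ψ) y

/-- Third derivative of `L0 ε η ψ`. -/
noncomputable def U3 (ε η : ℝ) (ψ : ℝ → ℂ) : ℝ → ℂ := fun y =>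
  (Real.exp (-(ε * η / 2)) : ℂ) * Complex.exp (Complex.I * η * y) *
    (Complex.I * η *
      (-(η : ℂ) ^ 2 * ψ y + Complex.I * η * (2 - (ε : ℂ) * η) * deriv ψ y
        + (1 - 2 * (ε : ℂ) * η) * deriv (deriv ψ) y
        + Complex.I * ε * deriv (deriv (deriv ψ)) y)
      + (-(η : ℂ) ^ 2 * deriv ψ y + Complex.I * η * (2 - (ε : ℂ) * η) * deriv (deriv ψ) y
        + (1 - 2 * (ε : ℂ) * η) * deriv (deriv (deriv ψ)) y
        + Complex.I * ε * deriv (deriv (deriv (deriv ψ))) y))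
  - deriv (deriv (deriv ψ)) y

/-- The commutator `[P², L₀]ψ`. -/
noncomputable def Vf (ε η : ℝ) (ψ : ℝ → ℂ) : ℝ → ℂ := fun y =>
  (Real.exp (-(ε * η / 2)) : ℂ) * Complex.exp (Complex.I * η * y) *
    ((η : ℂ) ^ 2 * ψ y - Complex.I * η * (2 - (ε : ℂ) * η) * deriv ψ y
      + 2 * (ε : ℂ) * η * deriv (deriv ψ) y)

/-- Derivative of `Vf`. -/
noncomputable def V1 (ε η : ℝ) (ψ : ℝ → ℂ) : ℝ → ℂ := fun y =>
  (Real.exp (-(ε * η / 2)) : ℂ) * Complex.exp (Complex.I * η * y) *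
    (Complex.I * η *
      ((η : ℂ) ^ 2 * ψ y - Complex.I * η * (2 - (ε : ℂ) * η) * deriv ψ y
        + 2 * (ε : ℂ) * η * deriv (deriv ψ) y)
      + ((η : ℂ) ^ 2 * deriv ψ y - Complex.I * η * (2 - (ε : ℂ) * η) * deriv (deriv ψ) y
        + 2 * (ε : ℂ) * η * deriv (deriv (deriv ψ)) y))

/-- First derivative of `L0d ε η (L0 ε η ψ)`. -/
noncomputable def W1 (ε η : ℝ) (ψ : ℝ → ℂ) : ℝ → ℂ := fun y =>
  (Real.exp (-(ε * η / 2)) : ℂ) * Complex.exp (-(Complex.I * η * y)) *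
    (-(Complex.I * η * (((1 : ℂ) + ε * η) * L0 ε η ψ y
        + Complex.I * ε * deriv (L0 ε η ψ) y))
      + (((1 : ℂ) + ε * η) * deriv (L0 ε η ψ) y
        + Complex.I * ε * deriv (deriv (L0 ε η ψ)) y))
  - deriv (L0 ε η ψ) y

/-- Second derivative of `L0d ε η (L0 ε η ψ)`. -/
noncomputable def W2 (ε η : ℝ) (ψ : ℝ → ℂ) : ℝ → ℂ := fun y =>
  (Real.exp (-(ε * η / 2)) : ℂ) * Complex.exp (-(Complex.I * η * y)) *
    (-(Complex.I * η * (-(Complex.I * η * (((1 : ℂ) + ε * η) * L0 ε η ψ y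
          + Complex.I * ε * deriv (L0 ε η ψ) y))
        + (((1 : ℂ) + ε * η) * deriv (L0 ε η ψ) y
          + Complex.I * ε * deriv (deriv (L0 ε η ψ)) y)))
      + (-(Complex.I * η * (((1 : ℂ) + ε * η) * deriv (L0 ε η ψ) y
          + Complex.I * ε * deriv (deriv (L0 ε η ψ)) y))
        + (((1 : ℂ) + ε * η) * deriv (deriv (L0 ε η ψ)) y
          + Complex.I * ε * U3 ε η ψ y)))
  - deriv (deriv (L0 ε η ψ)) y

set_option maxHeartbeats 4000000 in
theorem dissipator_p_squared (ε η : ℝ) (hε : 0 < ε) (hη : 0 < η)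
    (ψ : ℝ → ℂ) (hψ : ContDiff ℝ (⊤ : ℕ∞) ψ) (x : ℝ) :
    (1 / 2 : ℂ) * L0d ε η (opComm (Pop ∘ Pop) (L0 ε η) ψ) x +
      (1 / 2 : ℂ) * opComm (L0d ε η) (Pop ∘ Pop) (L0 ε η ψ) x =
      (η : ℂ) ^ 2 * (Real.exp (-(ε * η / 2)) : ℂ) ^ 2 * ψ x
      + 2 * η * (1 - ε * η) * (Real.exp (-(ε * η / 2)) : ℂ) ^ 2 * Pop ψ x
      - ε * η * (4 - ε * η) * (Real.exp (-(ε * η / 2)) : ℂ) ^ 2 * Pop (Pop ψ) x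
      + 2 * (ε : ℂ) ^ 2 * η * (Real.exp (-(ε * η / 2)) : ℂ) ^ 2 * Pop (Pop (Pop ψ)) x
      + (ε * (η : ℂ) ^ 3 / 2) * (Real.exp (-(ε * η / 2)) : ℂ) * (Real.cos (η * x) : ℂ) * ψ x
      + 2 * ε * η * (Real.exp (-(ε * η / 2)) : ℂ) *
          Pop (fun y => (Real.cos (η * y) : ℂ) * Pop ψ y) x
      - η * (2 + ε * η) * (Real.exp (-(ε * η / 2)) : ℂ) * (Real.cos (η * x) : ℂ) * Pop ψ x
      - Complex.I * ((η : ℂ) ^ 2 / 2) * (2 + ε * η) * (Real.exp (-(ε * η / 2)) : ℂ) *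
          (Real.sin (η * x) : ℂ) * ψ x := by
  -- differentiability of iterated derivatives
  have hc0 : ContDiff ℝ (⊤ : ℕ∞) ψ := hψ.of_le (by simp)
  have hc1 : ContDiff ℝ (⊤ : ℕ∞) (deriv ψ) := (contDiff_infty_iff_deriv.mp hc0).2
  have hc2 : ContDiff ℝ (⊤ : ℕ∞) (deriv (deriv ψ)) := (contDiff_infty_iff_deriv.mp hc1).2
  have hc3 : ContDiff ℝ (⊤ : ℕ∞) (deriv (deriv (deriv ψ))) := (contDiff_infty_iff_deriv.mp hc2).2
  have H0 : ∀ y : ℝ, HasDerivAt ψ (deriv ψ y) y :=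
    fun y => (hc0.differentiable (by simp) y).hasDerivAt
  have H1 : ∀ y : ℝ, HasDerivAt (deriv ψ) (deriv (deriv ψ) y) y :=
    fun y => (hc1.differentiable (by simp) y).hasDerivAt
  have H2 : ∀ y : ℝ, HasDerivAt (deriv (deriv ψ)) (deriv (deriv (deriv ψ)) y) y :=
    fun y => (hc2.differentiable (by simp) y).hasDerivAt
  have H3 : ∀ y : ℝ, HasDerivAt (deriv (deriv (deriv ψ))) (deriv (deriv (deriv (deriv ψ))) y) y :=
    fun y => (hc3.differentiable (by simp) y).hasDerivAt
  -- derivative of L0 ψ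
  have HU : ∀ y : ℝ, HasDerivAt (L0 ε η ψ) (U1 ε η ψ y) y := by
    intro y
    have hcombo : HasDerivAt (fun z : ℝ => ψ z + Complex.I * ε * deriv ψ z)
        (deriv ψ y + Complex.I * ε * deriv (deriv ψ) y) y :=
      (H0 y).add ((H1 y).const_mul _)
    have h := (((hasDerivAt_cexp_lin (Complex.I * η) y).const_mul ((Real.exp (-(ε * η / 2)) : ℝ) : ℂ)).mul hcombo).sub (H0 y)
    convert h using 1
    · rfl
    · rfl
    simp only [U1]
    ring_nf
    all_goals (try simp only [Complex.I_sq, I_cube, I_four])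
    all_goals (try ring_nf)
    all_goals (try ring)
  have hu_eq : deriv (L0 ε η ψ) = U1 ε η ψ := funext fun y => (HU y).deriv
  -- derivative of U1
  have HU1 : ∀ y : ℝ, HasDerivAt (U1 ε η ψ) (U2 ε η ψ y) y := by
    intro y
    have hcombo : HasDerivAt
        (fun z : ℝ => Complex.I * η * ψ z + (1 - (ε : ℂ) * η) * deriv ψ z
          + Complex.I * ε * deriv (deriv ψ) z)
        (Complex.I * η * deriv ψ y + (1 - (ε : ℂ) * η) * deriv (deriv ψ) y
          + Complex.I * ε * deriv (deriv (deriv ψ)) y) y :=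
      (((H0 y).const_mul _).add ((H1 y).const_mul _)).add ((H2 y).const_mul _)
    have h := (((hasDerivAt_cexp_lin (Complex.I * η) y).const_mul ((Real.exp (-(ε * η / 2)) : ℝ) : ℂ)).mul hcombo).sub (H1 y)
    convert h using 1
    · rfl
    · rfl
    simp only [U2]
    ring_nf
    all_goals (try simp only [Complex.I_sq, I_cube, I_four])
    all_goals (try ring_nf)
    all_goals (try ring)
  have hu1_eq : deriv (U1 ε η ψ) = U2 ε η ψ := funext fun y => (HU1 y).deriv
  -- derivative of U2
  have HU2 : ∀ y : ℝ, HasDerivAt (U2 ε η ψ) (U3 ε η ψ y) y := by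
    intro y
    have hcombo : HasDerivAt
        (fun z : ℝ => -(η : ℂ) ^ 2 * ψ z + Complex.I * η * (2 - (ε : ℂ) * η) * deriv ψ z
          + (1 - 2 * (ε : ℂ) * η) * deriv (deriv ψ) z
          + Complex.I * ε * deriv (deriv (deriv ψ)) z)
        (-(η : ℂ) ^ 2 * deriv ψ y + Complex.I * η * (2 - (ε : ℂ) * η) * deriv (deriv ψ) y
          + (1 - 2 * (ε : ℂ) * η) * deriv (deriv (deriv ψ)) y
          + Complex.I * ε * deriv (deriv (deriv (deriv ψ))) y) y :=
      ((((H0 y).const_mul _).add ((H1 y).const_mul _)).add ((H2 y).const_mul _)).add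
        ((H3 y).const_mul _)
    have h := (((hasDerivAt_cexp_lin (Complex.I * η) y).const_mul ((Real.exp (-(ε * η / 2)) : ℝ) : ℂ)).mul hcombo).sub (H2 y)
    convert h using 1
    · rfl
    · rfl
    simp only [U3]
    ring_nf
    all_goals (try simp only [Complex.I_sq, I_cube, I_four])
    all_goals (try ring_nf)
    all_goals (try ring)
  have Hderivu : ∀ y : ℝ, HasDerivAt (deriv (L0 ε η ψ)) (U2 ε η ψ y) y := by
    rw [hu_eq]; exact HU1
  have hderiv2_eq : deriv (deriv (L0 ε η ψ)) = U2 ε η ψ := by rw [hu_eq, hu1_eq]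
  have Hderiv2u : ∀ y : ℝ, HasDerivAt (deriv (deriv (L0 ε η ψ))) (U3 ε η ψ y) y := by
    rw [hu_eq, hu1_eq]; exact HU2
  -- derivative of Vf
  have HV : ∀ y : ℝ, HasDerivAt (Vf ε η ψ) (V1 ε η ψ y) y := by
    intro y
    have hcombo : HasDerivAt
        (fun z : ℝ => (η : ℂ) ^ 2 * ψ z - Complex.I * η * (2 - (ε : ℂ) * η) * deriv ψ z
          + 2 * (ε : ℂ) * η * deriv (deriv ψ) z)
        ((η : ℂ) ^ 2 * deriv ψ y - Complex.I * η * (2 - (ε : ℂ) * η) * deriv (deriv ψ) y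
          + 2 * (ε : ℂ) * η * deriv (deriv (deriv ψ)) y) y :=
      (((H0 y).const_mul _).sub ((H1 y).const_mul _)).add ((H2 y).const_mul _)
    have h := ((hasDerivAt_cexp_lin (Complex.I * η) y).const_mul ((Real.exp (-(ε * η / 2)) : ℝ) : ℂ)).mul hcombo
    convert h using 1
    · rfl
    · rfl
    simp only [V1]
    ring_nf
    all_goals (try simp only [Complex.I_sq, I_cube, I_four])
    all_goals (try ring_nf)
    all_goals (try ring)
  have hV1_eq : deriv (Vf ε η ψ) = V1 ε η ψ := funext fun y => (HV y).deriv
  -- derivative of L0d (L0 ψ)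
  have HW : ∀ y : ℝ, HasDerivAt (L0d ε η (L0 ε η ψ)) (W1 ε η ψ y) y := by
    intro y
    have hcombo : HasDerivAt
        (fun z : ℝ => ((1 : ℂ) + ε * η) * L0 ε η ψ z + Complex.I * ε * deriv (L0 ε η ψ) z)
        (((1 : ℂ) + ε * η) * U1 ε η ψ y + Complex.I * ε * U2 ε η ψ y) y :=
      ((HU y).const_mul _).add ((Hderivu y).const_mul _)
    have h := (((hasDerivAt_cexp_neg (Complex.I * η) y).const_mul ((Real.exp (-(ε * η / 2)) : ℝ) : ℂ)).mul hcombo).sub (HU y)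
    convert h using 1
    · rfl
    · rfl
    simp only [W1, hderiv2_eq, hu_eq, hu1_eq]
    ring_nf
    all_goals (try simp only [Complex.I_sq, I_cube, I_four])
    all_goals (try ring_nf)
    all_goals (try ring)
  have hw_eq : deriv (L0d ε η (L0 ε η ψ)) = W1 ε η ψ := funext fun y => (HW y).deriv
  -- derivative of W1
  have HW1 : ∀ y : ℝ, HasDerivAt (W1 ε η ψ) (W2 ε η ψ y) y := by
    intro y
    have hg : HasDerivAt
        (fun z : ℝ => ((1 : ℂ) + ε * η) * L0 ε η ψ z + Complex.I * ε * deriv (L0 ε η ψ) z)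
        (((1 : ℂ) + ε * η) * deriv (L0 ε η ψ) y + Complex.I * ε * deriv (deriv (L0 ε η ψ)) y) y := by
      have := ((HU y).const_mul ((1 : ℂ) + ε * η)).add ((Hderivu y).const_mul (Complex.I * ε))
      simpa only [hu_eq, hu1_eq, hderiv2_eq, Pi.add_def] using this
    have hg2 : HasDerivAt
        (fun z : ℝ => ((1 : ℂ) + ε * η) * deriv (L0 ε η ψ) z
          + Complex.I * ε * deriv (deriv (L0 ε η ψ)) z)
        (((1 : ℂ) + ε * η) * deriv (deriv (L0 ε η ψ)) y + Complex.I * ε * U3 ε η ψ y) y := by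
      have := ((Hderivu y).const_mul ((1 : ℂ) + ε * η)).add ((Hderiv2u y).const_mul (Complex.I * ε))
      simpa only [hu_eq, hu1_eq, hderiv2_eq, Pi.add_def] using this
    have hbig : HasDerivAt
        (fun z : ℝ => -(Complex.I * η * (((1 : ℂ) + ε * η) * L0 ε η ψ z
            + Complex.I * ε * deriv (L0 ε η ψ) z))
          + (((1 : ℂ) + ε * η) * deriv (L0 ε η ψ) z
            + Complex.I * ε * deriv (deriv (L0 ε η ψ)) z))
        (-(Complex.I * η * (((1 : ℂ) + ε * η) * deriv (L0 ε η ψ) y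
            + Complex.I * ε * deriv (deriv (L0 ε η ψ)) y))
          + (((1 : ℂ) + ε * η) * deriv (deriv (L0 ε η ψ)) y
            + Complex.I * ε * U3 ε η ψ y)) y :=
      ((hg.const_mul (Complex.I * η)).neg).add hg2
    have h := (((hasDerivAt_cexp_neg (Complex.I * η) y).const_mul ((Real.exp (-(ε * η / 2)) : ℝ) : ℂ)).mul hbig).sub (Hderivu y)
    convert h using 1
    · rfl
    · rfl
    simp only [W2, hu_eq, hu1_eq, hderiv2_eq]
    ring_nf
    all_goals (try simp only [Complex.I_sq, I_cube, I_four])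
    all_goals (try ring_nf)
    all_goals (try ring)
  -- Pop∘Pop computations
  have hPP2 : (Pop ∘ Pop) ψ = fun y => -(deriv (deriv ψ) y) := popPop ψ _ H1
  have hPPu : (Pop ∘ Pop) (L0 ε η ψ) = fun y => -(U2 ε η ψ y) := popPop _ _ Hderivu
  have hPPw : (Pop ∘ Pop) (L0d ε η (L0 ε η ψ)) = fun y => -(W2 ε η ψ y) :=
    popPop _ _ (by rw [hw_eq]; exact HW1)
  have hnegd2 : deriv (fun z : ℝ => -(deriv (deriv ψ) z)) =
      fun z => -(deriv (deriv (deriv ψ)) z) := funext fun z => (H2 z).neg.deriv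
  have hnegU2 : deriv (fun z : ℝ => -(U2 ε η ψ z)) = fun z => -(U3 ε η ψ z) :=
    funext fun z => (HU2 z).neg.deriv
  -- the commutator [P², L0]ψ
  have hVcomm : opComm (Pop ∘ Pop) (L0 ε η) ψ = Vf ε η ψ := by
    have e1 : opComm (Pop ∘ Pop) (L0 ε η) ψ
        = (Pop ∘ Pop) (L0 ε η ψ) - L0 ε η ((Pop ∘ Pop) ψ) := rfl
    rw [e1, hPPu, hPP2]
    funext y
    simp only [Pi.sub_apply, L0, Vf, hnegd2]
    simp only [U2]
    ring_nf
    all_goals (try simp only [Complex.I_sq, I_cube, I_four])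
    all_goals (try ring_nf)
    all_goals (try ring)
  -- RHS Pop computations
  have hpop1 : deriv (fun y : ℝ => -Complex.I * deriv ψ y)
      = fun y => -Complex.I * deriv (deriv ψ) y :=
    funext fun y => ((H1 y).const_mul _).deriv
  have hpop2 : deriv (fun y : ℝ => -Complex.I * (-Complex.I * deriv (deriv ψ) y))
      = fun y => -Complex.I * (-Complex.I * deriv (deriv (deriv ψ)) y) :=
    funext fun y => (((H2 y).const_mul (-Complex.I)).const_mul (-Complex.I)).deriv
  have hcosC : ∀ y : ℝ, HasDerivAt (fun z : ℝ => ((Real.cos (η * z) : ℝ) : ℂ))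
      ((-(Real.sin (η * y)) * η : ℝ) : ℂ) y := by
    intro y
    have h : HasDerivAt (fun z : ℝ => Real.cos (η * z)) (-(Real.sin (η * y)) * η) y := by
      simpa [Function.comp_def] using
        (Real.hasDerivAt_cos (η * y)).comp y ((hasDerivAt_id y).const_mul η)
    exact h.ofReal_comp
  have hcosder : deriv (fun y : ℝ => ((Real.cos (η * y) : ℝ) : ℂ) * (-Complex.I * deriv ψ y))
      = fun y => ((-(Real.sin (η * y)) * η : ℝ) : ℂ) * (-Complex.I * deriv ψ y)
        + ((Real.cos (η * y) : ℝ) : ℂ) * (-Complex.I * deriv (deriv ψ) y) :=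
    funext fun y => ((hcosC y).mul ((H1 y).const_mul _)).deriv
  -- assemble
  have e_main : opComm (L0d ε η) (Pop ∘ Pop) (L0 ε η ψ)
      = L0d ε η ((Pop ∘ Pop) (L0 ε η ψ)) - (Pop ∘ Pop) (L0d ε η (L0 ε η ψ)) := rfl
  have hPop : ∀ χ : ℝ → ℂ, Pop χ = fun y => -Complex.I * deriv χ y := fun χ => rfl
  rw [hVcomm, e_main, hPPu, hPPw]
  simp only [Pi.sub_apply, L0d, hPop]
  simp only [hV1_eq, hnegU2, hpop1, hpop2, hcosder]
  simp only [W2, V1, Vf, hderiv2_eq, hu_eq, hu1_eq]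
  simp only [U1, U2, U3, L0]
  simp only [Complex.ofReal_mul, Complex.ofReal_neg, Complex.ofReal_cos, Complex.ofReal_sin]
  simp only [Complex.cos, Complex.sin]
  rw [show ((η : ℂ) * (x : ℂ) * Complex.I) = Complex.I * η * x by ring,
      show (-((η : ℂ) * (x : ℂ)) * Complex.I) = -(Complex.I * η * x) by ring]
  have hEE : Complex.exp (Complex.I * η * x) * Complex.exp (-(Complex.I * η * x)) = 1 := by
    rw [← Complex.exp_add]
    simp
  ring_nf
  simp only [Complex.I_sq, I_cube, I_four]
  ring_nf
  linear_combination ((Real.exp (ε * η * (-1 / 2)) : ℝ) : ℂ) ^ 2 *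
    ((η : ℂ) ^ 2 * ψ x - 2 * Complex.I * η * (1 - (ε : ℂ) * η) * deriv ψ x
      + (ε : ℂ) * η * (4 - (ε : ℂ) * η) * deriv (deriv ψ) x
      + 2 * Complex.I * (ε : ℂ) ^ 2 * η * deriv (deriv (deriv ψ)) x) * hEE
end

section
/- Let ε, η > 0, 𝒜 = exp(-εη/2), and let f : ℝ → ℝ be a smooth function. Let M_h be the multiplication operator (M_hψ)(x) = f(ηx/2)·ψ(x). Define (L₂ψ)(x) = 𝒜·e^{-iηx}·(ψ(x) - iε·ψ'(x)) - ψ(x) and (L₂†ψ)(x) = 𝒜·e^{iηx}·((1+εη)·ψ(x) - iε·ψ'(x)) - ψ(x). Then for every smooth ψ : ℝ → ℂ and every x ∈ ℝ: ½·(L₂†([M_h, L₂]ψ))(x) + ½·(([L₂†, M_h])(L₂ψ))(x) = ½·(L₀†([M_h, L₀]ψ))(x) + ½·(([L₀†, M_h])(L₀ψ))(x), i.e. 𝒟*[L₂](M_h) = 𝒟*[L₀](M_h). -/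
set_option maxHeartbeats 1600000

open Complex

/-- The rotation `L₂` of `L₀` by angle `π` in phase space. -/
noncomputable def L2 (ε η : ℝ) : (ℝ → ℂ) → (ℝ → ℂ) := fun ψ x =>
  (Real.exp (-(ε * η / 2)) : ℂ) * Complex.exp (-(Complex.I * η * x)) *
    (ψ x - Complex.I * ε * deriv ψ x) - ψ x

/-- Formal adjoint `L₂†` of `L₂`. -/
noncomputable def L2d (ε η : ℝ) : (ℝ → ℂ) → (ℝ → ℂ) := fun ψ x =>
  (Real.exp (-(ε * η / 2)) : ℂ) * Complex.exp (Complex.I * η * x) *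
    (((1 : ℂ) + ε * η) * ψ x - Complex.I * ε * deriv ψ x) - ψ x

/-- Multiplication operator by `f(ηx/2)`. -/
noncomputable def Mh (η : ℝ) (f : ℝ → ℝ) : (ℝ → ℂ) → (ℝ → ℂ) := fun ψ x =>
  (f (η * x / 2) : ℂ) * ψ x

theorem dissipator_L2_eq_L0 (ε η : ℝ) (hε : 0 < ε) (hη : 0 < η)
    (f : ℝ → ℝ) (hf : ContDiff ℝ (⊤ : ℕ∞) f)
    (ψ : ℝ → ℂ) (hψ : ContDiff ℝ (⊤ : ℕ∞) ψ) (x : ℝ) :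
    (1 / 2 : ℂ) * L2d ε η (opComm (Mh η f) (L2 ε η) ψ) x +
      (1 / 2 : ℂ) * opComm (L2d ε η) (Mh η f) (L2 ε η ψ) x =
    (1 / 2 : ℂ) * L0d ε η (opComm (Mh η f) (L0 ε η) ψ) x +
      (1 / 2 : ℂ) * opComm (L0d ε η) (Mh η f) (L0 ε η ψ) x := by
  -- smoothness data
  have hf1 : ContDiff ℝ (⊤ : ℕ∞) f := hf.of_le (by simp)
  have hfd : Differentiable ℝ f := (contDiff_infty_iff_deriv.mp hf1).1
  have hfd' : Differentiable ℝ (deriv f) :=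
    (contDiff_infty_iff_deriv.mp (contDiff_infty_iff_deriv.mp hf1).2).1
  have hψ1 : ContDiff ℝ (⊤ : ℕ∞) ψ := hψ.of_le (by simp)
  have hψd : Differentiable ℝ ψ := (contDiff_infty_iff_deriv.mp hψ1).1
  have hψd' : Differentiable ℝ (deriv ψ) :=
    (contDiff_infty_iff_deriv.mp (contDiff_infty_iff_deriv.mp hψ1).2).1
  have hp : ∀ y : ℝ, HasDerivAt ψ (deriv ψ y) y := fun y => (hψd y).hasDerivAt
  have hp' : ∀ y : ℝ, HasDerivAt (deriv ψ) (deriv (deriv ψ) y) y := fun y => (hψd' y).hasDerivAt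
  -- inner linear map
  have hInner : ∀ y : ℝ, HasDerivAt (fun t : ℝ => η * t / 2) (η / 2) y := by
    intro y
    simpa using ((hasDerivAt_id y).const_mul η).div_const 2
  -- derivative of f(η t / 2) as complex function
  have hG : ∀ y : ℝ, HasDerivAt (fun t : ℝ => ((f (η * t / 2) : ℝ) : ℂ))
      ((deriv f (η * y / 2) * (η / 2) : ℝ) : ℂ) y := by
    intro y
    exact (((hfd (η * y / 2)).hasDerivAt.comp y (hInner y))).ofReal_comp
  have hG1 : ∀ y : ℝ, HasDerivAt (fun t : ℝ => ((deriv f (η * t / 2) * (η / 2) : ℝ) : ℂ))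
      ((deriv (deriv f) (η * y / 2) * (η / 2) * (η / 2) : ℝ) : ℂ) y := by
    intro y
    exact (((hfd' (η * y / 2)).hasDerivAt.comp y (hInner y)).mul_const (η / 2)).ofReal_comp
  -- exponentials
  have hEm : ∀ y : ℝ, HasDerivAt (fun t : ℝ => Complex.exp (-(Complex.I * ↑η * ↑t)))
      (Complex.exp (-(Complex.I * ↑η * ↑y)) * -(Complex.I * ↑η)) y := by
    intro y
    have h0 : HasDerivAt (fun t : ℝ => -(Complex.I * ↑η * ↑t)) (-(Complex.I * ↑η)) y := by
      have h1 : HasDerivAt (fun t : ℝ => (Complex.I * ↑η) * (t : ℂ)) (Complex.I * ↑η) y := by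
        simpa using (Complex.ofRealCLM.hasDerivAt (x := y)).const_mul (Complex.I * ↑η)
      exact h1.neg
    exact h0.cexp
  have hEp : ∀ y : ℝ, HasDerivAt (fun t : ℝ => Complex.exp (Complex.I * ↑η * ↑t))
      (Complex.exp (Complex.I * ↑η * ↑y) * (Complex.I * ↑η)) y := by
    intro y
    have h1 : HasDerivAt (fun t : ℝ => (Complex.I * ↑η) * (t : ℂ)) (Complex.I * ↑η) y := by
      simpa using (Complex.ofRealCLM.hasDerivAt (x := y)).const_mul (Complex.I * ↑η)
    exact h1.cexp
  -- derivative of Mh applied to ψ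
  have hMψ : ∀ y : ℝ, HasDerivAt (Mh η f ψ)
      (((deriv f (η * y / 2) * (η / 2) : ℝ) : ℂ) * ψ y
        + ((f (η * y / 2) : ℝ) : ℂ) * deriv ψ y) y := fun y => (hG y).mul (hp y)
  have dMψ : deriv (Mh η f ψ) = fun y => ((deriv f (η * y / 2) * (η / 2) : ℝ) : ℂ) * ψ y
      + ((f (η * y / 2) : ℝ) : ℂ) * deriv ψ y := funext fun y => (hMψ y).deriv
  have hMψ' : ∀ y : ℝ, HasDerivAt (deriv (Mh η f ψ))
      (((deriv (deriv f) (η * y / 2) * (η / 2) * (η / 2) : ℝ) : ℂ) * ψ y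
        + ((deriv f (η * y / 2) * (η / 2) : ℝ) : ℂ) * deriv ψ y
        + (((deriv f (η * y / 2) * (η / 2) : ℝ) : ℂ) * deriv ψ y
          + ((f (η * y / 2) : ℝ) : ℂ) * deriv (deriv ψ) y)) y := by
    intro y
    rw [dMψ]
    exact ((hG1 y).mul (hp y)).add ((hG y).mul (hp' y))
  -- generic derivative of L2, L0 applied to a function
  have kL2 : ∀ (φ : ℝ → ℂ) (y : ℝ) (d1 d2 : ℂ), HasDerivAt φ d1 y →
      HasDerivAt (deriv φ) d2 y →
      HasDerivAt (L2 ε η φ)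
        ((Real.exp (-(ε * η / 2)) : ℂ) * (Complex.exp (-(Complex.I * ↑η * ↑y)) * -(Complex.I * ↑η))
            * (φ y - Complex.I * ↑ε * deriv φ y)
          + (Real.exp (-(ε * η / 2)) : ℂ) * Complex.exp (-(Complex.I * ↑η * ↑y))
            * (d1 - Complex.I * ↑ε * d2) - d1) y := by
    intro φ y d1 d2 h1 h2
    have h := (((hEm y).const_mul ((Real.exp (-(ε * η / 2)) : ℝ) : ℂ)).mul
      (h1.sub (h2.const_mul (Complex.I * ↑ε)))).sub h1
    exact h
  have kL0 : ∀ (φ : ℝ → ℂ) (y : ℝ) (d1 d2 : ℂ), HasDerivAt φ d1 y →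
      HasDerivAt (deriv φ) d2 y →
      HasDerivAt (L0 ε η φ)
        ((Real.exp (-(ε * η / 2)) : ℂ) * (Complex.exp (Complex.I * ↑η * ↑y) * (Complex.I * ↑η))
            * (φ y + Complex.I * ↑ε * deriv φ y)
          + (Real.exp (-(ε * η / 2)) : ℂ) * Complex.exp (Complex.I * ↑η * ↑y)
            * (d1 + Complex.I * ↑ε * d2) - d1) y := by
    intro φ y d1 d2 h1 h2
    have h := (((hEp y).const_mul ((Real.exp (-(ε * η / 2)) : ℝ) : ℂ)).mul
      (h1.add (h2.const_mul (Complex.I * ↑ε)))).sub h1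
    exact h
  -- instantiations at x
  have hL2ψ := kL2 ψ x (deriv ψ x) (deriv (deriv ψ) x) (hp x) (hp' x)
  have hL0ψ := kL0 ψ x (deriv ψ x) (deriv (deriv ψ) x) (hp x) (hp' x)
  have hL2M := kL2 (Mh η f ψ) x _ _ (hMψ x) (hMψ' x)
  have hL0M := kL0 (Mh η f ψ) x _ _ (hMψ x) (hMψ' x)
  have hMhL2 := (hG x).mul hL2ψ
  have hMhL0 := (hG x).mul hL0ψ
  -- now unfold and rewrite
  simp only [opComm, Pi.sub_apply]
  rw [show Mh η f (L2d ε η (L2 ε η ψ)) x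
      = ((f (η * x / 2) : ℝ) : ℂ) * L2d ε η (L2 ε η ψ) x from rfl]
  rw [show Mh η f (L0d ε η (L0 ε η ψ)) x
      = ((f (η * x / 2) : ℝ) : ℂ) * L0d ε η (L0 ε η ψ) x from rfl]
  simp only [L2d, L0d]
  simp only [Pi.sub_apply]
  rw [show deriv (Mh η f (L2 ε η ψ) - L2 ε η (Mh η f ψ)) x = _ from (hMhL2.sub hL2M).deriv,
    show deriv (Mh η f (L0 ε η ψ) - L0 ε η (Mh η f ψ)) x = _ from (hMhL0.sub hL0M).deriv,
    show deriv (Mh η f (L2 ε η ψ)) x = _ from hMhL2.deriv,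
    show deriv (Mh η f (L0 ε η ψ)) x = _ from hMhL0.deriv,
    hL2ψ.deriv, hL0ψ.deriv, (hMψ x).deriv]
  rw [show L2 ε η (Mh η f ψ) x = (Real.exp (-(ε * η / 2)) : ℂ)
        * Complex.exp (-(Complex.I * ↑η * ↑x))
        * (Mh η f ψ x - Complex.I * ↑ε * deriv (Mh η f ψ) x) - Mh η f ψ x from rfl,
      show L0 ε η (Mh η f ψ) x = (Real.exp (-(ε * η / 2)) : ℂ)
        * Complex.exp (Complex.I * ↑η * ↑x)
        * (Mh η f ψ x + Complex.I * ↑ε * deriv (Mh η f ψ) x) - Mh η f ψ x from rfl]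
  rw [(hMψ x).deriv]
  simp only [L2, L0, Mh, Pi.sub_apply]
  have huv : Complex.exp (Complex.I * (η:ℝ) * (x:ℝ)) * Complex.exp (-(Complex.I * (η:ℝ) * (x:ℝ))) = 1 := by
    rw [← Complex.exp_add]
    simp
  have hII : Complex.I * Complex.I = (-1 : ℂ) := Complex.I_mul_I
  linear_combination
    ((Real.exp (-(ε * η / 2)) : ℂ) * (Real.exp (-(ε * η / 2)) : ℂ)
        * ((deriv f (η * x / 2) * (η / 2) : ℝ) : ℂ) * ((ε:ℝ):ℂ) * ((ε:ℝ):ℂ)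
        * Complex.I * ((η:ℝ):ℂ) * ψ x
      + (Real.exp (-(ε * η / 2)) : ℂ) * (Real.exp (-(ε * η / 2)) : ℂ)
        * ((deriv f (η * x / 2) * (η / 2) : ℝ) : ℂ) * ((ε:ℝ):ℂ) * ((ε:ℝ):ℂ)
        * Complex.I * Complex.I * Complex.I * ((η:ℝ):ℂ) * ψ x) * huv
    + ((Real.exp (-(ε * η / 2)) : ℂ) * (Real.exp (-(ε * η / 2)) : ℂ)
        * ((deriv f (η * x / 2) * (η / 2) : ℝ) : ℂ) * ((ε:ℝ):ℂ) * ((ε:ℝ):ℂ)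
        * Complex.I * ((η:ℝ):ℂ) * ψ x) * hII
end

section
/- Let ε > 0, η = 2√π, 𝒜 = exp(-εη/2), Γ > 0, κ ≥ 0, and let f : ℝ → ℝ be a smooth 2π-periodic function. Let M_h be the multiplication operator (M_hψ)(x) = f(ηx/2)·ψ(x), and define the operators L₀, L₁, L₂, L₃ and their formal adjoints by (L₀ψ)(x) = 𝒜·e^{iηx}·(ψ(x) + iε·ψ'(x)) - ψ(x), (L₀†ψ)(x) = 𝒜·e^{-iηx}·((1+εη)·ψ(x) + iε·ψ'(x)) - ψ(x); (L₁ψ)(x) = 𝒜·(1 + ε(x+η))·ψ(x+η) - ψ(x), (L₁†ψ)(x) = 𝒜·(1 + εx)·ψ(x-η) - ψ(x); (L₂ψ)(x) = 𝒜·e^{-iηx}·(ψ(x) - iε·ψ'(x)) - ψ(x), (L₂†ψ)(x) = 𝒜·e^{iηx}·((1+εη)·ψ(x) - iε·ψ'(x)) - ψ(x); (L₃ψ)(x) = 𝒜·(1 - ε(x-η))·ψ(x-η) - ψ(x), (L₃†ψ)(x) = 𝒜·(1 - εx)·ψ(x+η) - ψ(x). Let Q and P be the position and momentum operators (Qψ)(x)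 = x·ψ(x), (Pψ)(x) = -i·ψ'(x), and set σ = 𝒜εη/4 + κη/(8𝒜εΓ). Then for every smooth ψ : ℝ → ℂ and every x ∈ ℝ: Γ·Σ_{k=0}^{3} ½·(L_k†([M_h,L_k]ψ) + [L_k†,M_h](L_kψ))(x) + κ·(Q(M_h(Qψ)) - ½Q(Q(M_hψ)) - ½M_h(Q(Qψ)))(x) + κ·(P(M_h(Pψ)) - ½P(P(M_hψ)) - ½M_h(P(Pψ)))(x) = -𝒜εηΓ·( sin(ηx)·f'(ηx/2) - σ·f''(ηx/2) )·ψ(x). -/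
open Complex

/-- Lindblad operator `L₁`, rotation of `L₀` by `π/2`. -/
noncomputable def L1 (ε η : ℝ) : (ℝ → ℂ) → (ℝ → ℂ) := fun ψ x =>
  (Real.exp (-(ε * η / 2)) : ℂ) * ((1 : ℂ) + ε * (x + η)) * ψ (x + η) - ψ x

/-- Formal adjoint `L₁†`. -/
noncomputable def L1d (ε η : ℝ) : (ℝ → ℂ) → (ℝ → ℂ) := fun ψ x =>
  (Real.exp (-(ε * η / 2)) : ℂ) * ((1 : ℂ) + ε * x) * ψ (x - η) - ψ x

/-- Lindblad operator `L₃`, rotation of `L₀` by `3π/2`. -/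
noncomputable def L3 (ε η : ℝ) : (ℝ → ℂ) → (ℝ → ℂ) := fun ψ x =>
  (Real.exp (-(ε * η / 2)) : ℂ) * ((1 : ℂ) - ε * (x - η)) * ψ (x - η) - ψ x

/-- Formal adjoint `L₃†`. -/
noncomputable def L3d (ε η : ℝ) : (ℝ → ℂ) → (ℝ → ℂ) := fun ψ x =>
  (Real.exp (-(ε * η / 2)) : ℂ) * ((1 : ℂ) - ε * x) * ψ (x + η) - ψ x

/-- Adjoint dissipator `𝒟*[L](H) = ½(L†∘[H,L] + [L†,H]∘L)` evaluated on `ψ` at `x`. -/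
noncomputable def Dstar (L Ld H : (ℝ → ℂ) → (ℝ → ℂ)) (ψ : ℝ → ℂ) (x : ℝ) : ℂ :=
  (1 / 2 : ℂ) * Ld (opComm H L ψ) x + (1 / 2 : ℂ) * opComm Ld H (L ψ) x

lemma hasDerivAt_expC (c : ℂ) (y : ℝ) :
    HasDerivAt (fun t : ℝ => Complex.exp (c * t)) (c * Complex.exp (c * y)) y := by
  have h1 : HasDerivAt (fun w : ℂ => c * w) c (y : ℂ) := by
    simpa using (hasDerivAt_id (y : ℂ)).const_mul c
  have h2 := (Complex.hasDerivAt_exp (c * y)).comp (y : ℂ) h1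
  have h3 : HasDerivAt (fun w : ℂ => Complex.exp (c * w)) (Complex.exp (c * y) * c) (y : ℂ) := by
    simpa [Function.comp_def] using h2
  have h4 := h3.comp_ofReal
  simpa [mul_comm] using h4

lemma hasDerivAt_expNegC (c : ℂ) (y : ℝ) :
    HasDerivAt (fun t : ℝ => Complex.exp (-(c * t))) (-c * Complex.exp (-(c * y))) y := by
  have h1 : HasDerivAt (fun w : ℂ => -(c * w)) (-c) (y : ℂ) := by
    simpa using (hasDerivAt_id (y : ℂ)).const_mul (-c)
  have h2 := (Complex.hasDerivAt_exp (-(c * y))).comp (y : ℂ) h1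
  have h3 : HasDerivAt (fun w : ℂ => Complex.exp (-(c * w))) (Complex.exp (-(c * y)) * -c) (y : ℂ) := by
    simpa [Function.comp_def] using h2
  have h4 := h3.comp_ofReal
  simpa [mul_comm] using h4

set_option maxHeartbeats 2000000 in
theorem witten_laplacian_from_gkp_dissipators
    (ε : ℝ) (hε : 0 < ε) (η : ℝ) (hη : η = 2 * Real.sqrt Real.pi)
    (Γ κ : ℝ) (hΓ : 0 < Γ) (hκ : 0 ≤ κ)
    (f : ℝ → ℝ) (hf : ContDiff ℝ (⊤ : ℕ∞) f) (hper : Function.Periodic f (2 * Real.pi))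
    (ψ : ℝ → ℂ) (hψ : ContDiff ℝ (⊤ : ℕ∞) ψ) (x : ℝ) :
    (Γ : ℂ) * (Dstar (L0 ε η) (L0d ε η) (Mh η f) ψ x
              + Dstar (L1 ε η) (L1d ε η) (Mh η f) ψ x
              + Dstar (L2 ε η) (L2d ε η) (Mh η f) ψ x
              + Dstar (L3 ε η) (L3d ε η) (Mh η f) ψ x)
    + (κ : ℂ) * (Qop (Mh η f (Qop ψ)) x - (1 / 2 : ℂ) * Qop (Qop (Mh η f ψ)) x
              - (1 / 2 : ℂ) * Mh η f (Qop (Qop ψ)) x)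
    + (κ : ℂ) * (Pop (Mh η f (Pop ψ)) x - (1 / 2 : ℂ) * Pop (Pop (Mh η f ψ)) x
              - (1 / 2 : ℂ) * Mh η f (Pop (Pop ψ)) x) =
    -((Real.exp (-(ε * η / 2)) : ℂ) * ε * η * Γ) *
      ((Real.sin (η * x) : ℂ) * (deriv f (η * x / 2) : ℝ) -
        ((Real.exp (-(ε * η / 2)) * ε * η / 4 +
            κ * η / (8 * Real.exp (-(ε * η / 2)) * ε * Γ) : ℝ) : ℂ) *
          (deriv (deriv f) (η * x / 2) : ℝ)) * ψ x := by
  have hA0 : ((Real.exp (-(ε * η / 2)) : ℝ) : ℂ) ≠ 0 :=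
    Complex.ofReal_ne_zero.mpr (Real.exp_ne_zero _)
  have hε0 : (ε : ℂ) ≠ 0 := Complex.ofReal_ne_zero.mpr hε.ne'
  have hΓ0 : (Γ : ℂ) ≠ 0 := Complex.ofReal_ne_zero.mpr hΓ.ne'
  have hE0 : Complex.exp (Complex.I * (η : ℂ) * (x : ℂ)) ≠ 0 := Complex.exp_ne_zero _
  -- periodicity shifts
  have hη2 : η * η = 4 * Real.pi := by
    rw [hη, show 2 * Real.sqrt Real.pi * (2 * Real.sqrt Real.pi)
        = 4 * (Real.sqrt Real.pi * Real.sqrt Real.pi) by ring,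
      Real.mul_self_sqrt Real.pi_pos.le]
  have hshift : ∀ y : ℝ, f (η * (y + η) / 2) = f (η * y / 2) := by
    intro y
    rw [show η * (y + η) / 2 = η * y / 2 + η * η / 2 by ring, hη2,
      show η * y / 2 + 4 * Real.pi / 2 = η * y / 2 + 2 * Real.pi by ring]
    exact hper _
  have hshift' : ∀ y : ℝ, f (η * (y - η) / 2) = f (η * y / 2) := by
    intro y
    have h := hshift (y - η)
    rw [show y - η + η = y by ring] at h
    exact h.symm
  -- derivative facts
  have hψd : ∀ y : ℝ, HasDerivAt ψ (deriv ψ y) y := fun y =>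
    ((hψ.differentiable (by simp)) y).hasDerivAt
  have hψ1d : ∀ y : ℝ, HasDerivAt (deriv ψ) (deriv (deriv ψ) y) y := fun y =>
    (((contDiff_infty_iff_deriv.mp (hψ.of_le (by simp))).2.differentiable
      (by simp)) y).hasDerivAt
  have hfd : ∀ t : ℝ, HasDerivAt f (deriv f t) t := fun t =>
    ((hf.differentiable (by simp)) t).hasDerivAt
  have hf1d : ∀ t : ℝ, HasDerivAt (deriv f) (deriv (deriv f) t) t := fun t =>
    (((contDiff_infty_iff_deriv.mp (hf.of_le (by simp))).2.differentiable
      (by simp)) t).hasDerivAt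
  have hlin : ∀ y : ℝ, HasDerivAt (fun z : ℝ => η * z / 2) (η / 2) y := fun y => by
    simpa using ((hasDerivAt_id y).const_mul η).div_const 2
  have hfc : ∀ y : ℝ, HasDerivAt (fun z : ℝ => ((f (η * z / 2) : ℝ) : ℂ))
      ((η : ℂ) / 2 * ((deriv f (η * y / 2) : ℝ) : ℂ)) y := by
    intro y
    have h1 := ((hfd (η * y / 2)).comp y (hlin y)).ofReal_comp
    simp only [Function.comp_def] at h1
    convert h1 using 1
    push_cast
    ring
  have hf1c : ∀ y : ℝ, HasDerivAt (fun z : ℝ => ((deriv f (η * z / 2) : ℝ) : ℂ))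
      ((η : ℂ) / 2 * ((deriv (deriv f) (η * y / 2) : ℝ) : ℂ)) y := by
    intro y
    have h1 := ((hf1d (η * y / 2)).comp y (hlin y)).ofReal_comp
    simp only [Function.comp_def] at h1
    convert h1 using 1
    push_cast
    ring
  have hsc : ∀ y : ℝ, HasDerivAt
      (fun z : ℝ => (η : ℂ) / 2 * ((deriv f (η * z / 2) : ℝ) : ℂ))
      ((η : ℂ) / 2 * ((η : ℂ) / 2 * ((deriv (deriv f) (η * y / 2) : ℝ) : ℂ))) y :=
    fun y => (hf1c y).const_mul ((η : ℂ) / 2)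
  -- rfl unfolding lemmas (work also under `deriv`)
  have eM : ∀ φ : ℝ → ℂ, Mh η f φ = fun z : ℝ => ((f (η * z / 2) : ℝ) : ℂ) * φ z :=
    fun _ => rfl
  have eQ : ∀ φ : ℝ → ℂ, Qop φ = fun z : ℝ => (z : ℂ) * φ z := fun _ => rfl
  have eP : ∀ φ : ℝ → ℂ, Pop φ = fun z : ℝ => -Complex.I * deriv φ z := fun _ => rfl
  have eL0 : ∀ φ : ℝ → ℂ, L0 ε η φ = fun z : ℝ =>
      (Real.exp (-(ε * η / 2)) : ℂ) * Complex.exp (Complex.I * η * z) *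
        (φ z + Complex.I * ε * deriv φ z) - φ z := fun _ => rfl
  have eL0d : ∀ φ : ℝ → ℂ, L0d ε η φ = fun z : ℝ =>
      (Real.exp (-(ε * η / 2)) : ℂ) * Complex.exp (-(Complex.I * η * z)) *
        (((1 : ℂ) + ε * η) * φ z + Complex.I * ε * deriv φ z) - φ z := fun _ => rfl
  have eL1 : ∀ φ : ℝ → ℂ, L1 ε η φ = fun z : ℝ =>
      (Real.exp (-(ε * η / 2)) : ℂ) * ((1 : ℂ) + ε * (z + η)) * φ (z + η) - φ z := fun _ => rfl
  have eL1d : ∀ φ : ℝ → ℂ, L1d ε η φ = fun z : ℝ =>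
      (Real.exp (-(ε * η / 2)) : ℂ) * ((1 : ℂ) + ε * z) * φ (z - η) - φ z := fun _ => rfl
  have eL2 : ∀ φ : ℝ → ℂ, L2 ε η φ = fun z : ℝ =>
      (Real.exp (-(ε * η / 2)) : ℂ) * Complex.exp (-(Complex.I * η * z)) *
        (φ z - Complex.I * ε * deriv φ z) - φ z := fun _ => rfl
  have eL2d : ∀ φ : ℝ → ℂ, L2d ε η φ = fun z : ℝ =>
      (Real.exp (-(ε * η / 2)) : ℂ) * Complex.exp (Complex.I * η * z) *
        (((1 : ℂ) + ε * η) * φ z - Complex.I * ε * deriv φ z) - φ z := fun _ => rfl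
  have eL3 : ∀ φ : ℝ → ℂ, L3 ε η φ = fun z : ℝ =>
      (Real.exp (-(ε * η / 2)) : ℂ) * ((1 : ℂ) - ε * (z - η)) * φ (z - η) - φ z := fun _ => rfl
  have eL3d : ∀ φ : ℝ → ℂ, L3d ε η φ = fun z : ℝ =>
      (Real.exp (-(ε * η / 2)) : ℂ) * ((1 : ℂ) - ε * z) * φ (z + η) - φ z := fun _ => rfl
  -- deriv of Mh ψ as a function
  have hMderiv : deriv (fun z : ℝ => ((f (η * z / 2) : ℝ) : ℂ) * ψ z)
      = fun y : ℝ => (η : ℂ) / 2 * ((deriv f (η * y / 2) : ℝ) : ℂ) * ψ y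
          + ((f (η * y / 2) : ℝ) : ℂ) * deriv ψ y :=
    funext fun y => ((hfc y).mul (hψd y)).deriv
  -- commutator closed forms
  have hC0 : opComm (Mh η f) (L0 ε η) ψ
      = fun y : ℝ => -(Complex.I * (ε : ℂ) * ((Real.exp (-(ε * η / 2)) : ℝ) : ℂ)) *
          Complex.exp (Complex.I * (η : ℂ) * (y : ℂ)) *
          ((η : ℂ) / 2 * ((deriv f (η * y / 2) : ℝ) : ℂ)) * ψ y := by
    funext y
    simp only [opComm, Pi.sub_apply, eM, eL0]
    have e1 := ((hfc y).mul (hψd y)).deriv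
    simp only [Pi.mul_def] at e1
    rw [e1]
    ring
  have hC2 : opComm (Mh η f) (L2 ε η) ψ
      = fun y : ℝ => (Complex.I * (ε : ℂ) * ((Real.exp (-(ε * η / 2)) : ℝ) : ℂ)) *
          Complex.exp (-(Complex.I * (η : ℂ) * (y : ℂ))) *
          ((η : ℂ) / 2 * ((deriv f (η * y / 2) : ℝ) : ℂ)) * ψ y := by
    funext y
    simp only [opComm, Pi.sub_apply, eM, eL2]
    have e1 := ((hfc y).mul (hψd y)).deriv
    simp only [Pi.mul_def] at e1
    rw [e1]
    ring
  have hC1 : opComm (Mh η f) (L1 ε η) ψ = fun _ : ℝ => (0 : ℂ) := by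
    funext y
    simp only [opComm, Pi.sub_apply, eM, eL1]
    rw [hshift y]
    ring
  have hC3 : opComm (Mh η f) (L3 ε η) ψ = fun _ : ℝ => (0 : ℂ) := by
    funext y
    simp only [opComm, Pi.sub_apply, eM, eL3]
    rw [hshift' y]
    ring
  -- derivatives of the closed-form commutators
  have hd0 := (((hasDerivAt_expC (Complex.I * (η : ℂ)) x).const_mul
      (-(Complex.I * (ε : ℂ) * ((Real.exp (-(ε * η / 2)) : ℝ) : ℂ)))).mul (hsc x)).mul (hψd x)
  have hd2 := (((hasDerivAt_expNegC (Complex.I * (η : ℂ)) x).const_mul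
      (Complex.I * (ε : ℂ) * ((Real.exp (-(ε * η / 2)) : ℝ) : ℂ))).mul (hsc x)).mul (hψd x)
  -- derivatives of L0 ψ and L2 ψ bodies
  have hχ0 := (((hasDerivAt_expC (Complex.I * (η : ℂ)) x).const_mul
      ((Real.exp (-(ε * η / 2)) : ℝ) : ℂ)).mul
      ((hψd x).add ((hψ1d x).const_mul (Complex.I * (ε : ℂ))))).sub (hψd x)
  have hχ2 := (((hasDerivAt_expNegC (Complex.I * (η : ℂ)) x).const_mul
      ((Real.exp (-(ε * η / 2)) : ℝ) : ℂ)).mul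
      ((hψd x).sub ((hψ1d x).const_mul (Complex.I * (ε : ℂ))))).sub (hψd x)
  beta_reduce at hd0 hd2 hχ0 hχ2
  -- sine in terms of exponentials
  have hsin2 : ((Real.sin (η * x) : ℝ) : ℂ)
      = (Complex.exp (Complex.I * (η : ℂ) * (x : ℂ))
          - Complex.exp (-(Complex.I * (η : ℂ) * (x : ℂ)))) * (-Complex.I) / 2 := by
    rw [show Complex.I * (η : ℂ) * (x : ℂ) = ((η * x : ℝ) : ℂ) * Complex.I by push_cast; ring]
    rw [show -(((η * x : ℝ) : ℂ) * Complex.I) = ((-(η * x) : ℝ) : ℂ) * Complex.I by push_cast; ring]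
    rw [Complex.exp_mul_I, Complex.exp_mul_I,
      ← Complex.ofReal_sin, ← Complex.ofReal_cos, ← Complex.ofReal_sin, ← Complex.ofReal_cos,
      Real.sin_neg, Real.cos_neg]
    push_cast
    linear_combination Complex.sin ((η : ℂ) * (x : ℂ)) * Complex.I_sq
  have hEneg : Complex.exp (-(Complex.I * (η : ℂ) * (x : ℂ)))
      = (Complex.exp (Complex.I * (η : ℂ) * (x : ℂ)))⁻¹ := Complex.exp_neg _
  have hu0 : Complex.exp (Complex.I * (η : ℂ) * (x : ℂ)) ≠ 0 := Complex.exp_ne_zero _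
  have hEneg2 : Complex.exp (Complex.I * (η : ℂ) * (x : ℂ))
      = (Complex.exp (-(Complex.I * (η : ℂ) * (x : ℂ))))⁻¹ := by
    rw [← Complex.exp_neg, neg_neg]
  -- piece k = 0
  have hD0 : (1 / 2 : ℂ) * L0d ε η (opComm (Mh η f) (L0 ε η) ψ) x
      + (1 / 2 : ℂ) * opComm (L0d ε η) (Mh η f) (L0 ε η ψ) x
      = ((Real.exp (-(ε * η / 2)) : ℝ) : ℂ) ^ 2 * (ε : ℂ) ^ 2 * (η : ℂ) ^ 2 / 8 *
          ((deriv (deriv f) (η * x / 2) : ℝ) : ℂ) * ψ x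
        - ((Real.exp (-(ε * η / 2)) : ℝ) : ℂ) * (ε : ℂ) * (η : ℂ) / 2 *
          ((Real.sin (η * x) : ℝ) : ℂ) * ((deriv f (η * x / 2) : ℝ) : ℂ) * ψ x := by
    rw [hC0]
    simp only [opComm, Pi.sub_apply, eL0d, eL0, eM]
    have e1 := ((hfc x).mul hχ0).deriv
    have e2 := hχ0.deriv
    have e3 := hd0.deriv
    simp only [Pi.mul_def, Pi.add_def, Pi.sub_def] at e1 e2 e3
    rw [e1, e2, e3]
    rw [hsin2, hEneg]
    field_simp [Complex.exp_ne_zero]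
    ring_nf
    simp only [Complex.I_sq, show Complex.I ^ 3 = -Complex.I by
        rw [pow_succ, Complex.I_sq]; ring,
      show Complex.I ^ 4 = 1 by rw [pow_succ, show Complex.I ^ 3 = -Complex.I by
        rw [pow_succ, Complex.I_sq]; ring]; simp [Complex.I_mul_I]]
    field_simp [Complex.exp_ne_zero]
    ring
  -- piece k = 2
  have hD2 : (1 / 2 : ℂ) * L2d ε η (opComm (Mh η f) (L2 ε η) ψ) x
      + (1 / 2 : ℂ) * opComm (L2d ε η) (Mh η f) (L2 ε η ψ) x
      = ((Real.exp (-(ε * η / 2)) : ℝ) : ℂ) ^ 2 * (ε : ℂ) ^ 2 * (η : ℂ) ^ 2 / 8 *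
          ((deriv (deriv f) (η * x / 2) : ℝ) : ℂ) * ψ x
        - ((Real.exp (-(ε * η / 2)) : ℝ) : ℂ) * (ε : ℂ) * (η : ℂ) / 2 *
          ((Real.sin (η * x) : ℝ) : ℂ) * ((deriv f (η * x / 2) : ℝ) : ℂ) * ψ x := by
    rw [hC2]
    simp only [opComm, Pi.sub_apply, eL2d, eL2, eM]
    have e1 := ((hfc x).mul hχ2).deriv
    have e2 := hχ2.deriv
    have e3 := hd2.deriv
    simp only [Pi.mul_def, Pi.add_def, Pi.sub_def] at e1 e2 e3
    rw [e1, e2, e3]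
    rw [hsin2, hEneg2]
    field_simp [Complex.exp_ne_zero]
    ring_nf
    simp only [Complex.I_sq, show Complex.I ^ 3 = -Complex.I by
        rw [pow_succ, Complex.I_sq]; ring,
      show Complex.I ^ 4 = 1 by rw [pow_succ, show Complex.I ^ 3 = -Complex.I by
        rw [pow_succ, Complex.I_sq]; ring]; simp [Complex.I_mul_I]]
    field_simp [Complex.exp_ne_zero]
    ring
  -- piece k = 1
  have hD1 : (1 / 2 : ℂ) * L1d ε η (opComm (Mh η f) (L1 ε η) ψ) x
      + (1 / 2 : ℂ) * opComm (L1d ε η) (Mh η f) (L1 ε η ψ) x = 0 := by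
    rw [hC1]
    simp only [opComm, Pi.sub_apply, eL1d, eL1, eM]
    rw [hshift' x]
    ring
  -- piece k = 3
  have hD3 : (1 / 2 : ℂ) * L3d ε η (opComm (Mh η f) (L3 ε η) ψ) x
      + (1 / 2 : ℂ) * opComm (L3d ε η) (Mh η f) (L3 ε η ψ) x = 0 := by
    rw [hC3]
    simp only [opComm, Pi.sub_apply, eL3d, eL3, eM]
    rw [hshift x]
    ring
  -- quadrature Q piece
  have hQ : Qop (Mh η f (Qop ψ)) x - (1 / 2 : ℂ) * Qop (Qop (Mh η f ψ)) x
      - (1 / 2 : ℂ) * Mh η f (Qop (Qop ψ)) x = 0 := by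
    simp only [eQ, eM]
    ring
  -- quadrature P piece
  have hP : Pop (Mh η f (Pop ψ)) x - (1 / 2 : ℂ) * Pop (Pop (Mh η f ψ)) x
      - (1 / 2 : ℂ) * Mh η f (Pop (Pop ψ)) x
      = (η : ℂ) ^ 2 / 8 * ((deriv (deriv f) (η * x / 2) : ℝ) : ℂ) * ψ x := by
    simp only [eP, eM]
    rw [hMderiv]
    beta_reduce
    have e1 := ((hfc x).mul ((hψ1d x).const_mul (-Complex.I))).deriv
    have e2 := ((((hsc x).mul (hψd x)).add ((hfc x).mul (hψ1d x))).const_mul (-Complex.I)).deriv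
    have e3 := ((hψ1d x).const_mul (-Complex.I)).deriv
    simp only [Pi.mul_def, Pi.add_def, Pi.sub_def] at e1 e2 e3
    rw [e1, e2, e3]
    ring_nf
    simp only [Complex.I_sq, show Complex.I ^ 3 = -Complex.I by
        rw [pow_succ, Complex.I_sq]; ring,
      show Complex.I ^ 4 = 1 by rw [pow_succ, show Complex.I ^ 3 = -Complex.I by
        rw [pow_succ, Complex.I_sq]; ring]; simp [Complex.I_mul_I]]
    ring
  -- RHS rewrite
  have hRHS : -((Real.exp (-(ε * η / 2)) : ℂ) * ε * η * Γ) *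
      ((Real.sin (η * x) : ℂ) * (deriv f (η * x / 2) : ℝ) -
        ((Real.exp (-(ε * η / 2)) * ε * η / 4 +
            κ * η / (8 * Real.exp (-(ε * η / 2)) * ε * Γ) : ℝ) : ℂ) *
          (deriv (deriv f) (η * x / 2) : ℝ)) * ψ x
      = -(((Real.exp (-(ε * η / 2)) : ℝ) : ℂ) * (ε : ℂ) * (η : ℂ) * (Γ : ℂ)) *
          ((Real.sin (η * x) : ℝ) : ℂ) * ((deriv f (η * x / 2) : ℝ) : ℂ) * ψ x
        + (((Real.exp (-(ε * η / 2)) : ℝ) : ℂ) ^ 2 * (ε : ℂ) ^ 2 * (η : ℂ) ^ 2 * (Γ : ℂ) / 4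
            + (κ : ℂ) * (η : ℂ) ^ 2 / 8) *
          ((deriv (deriv f) (η * x / 2) : ℝ) : ℂ) * ψ x := by
    have hAne : Real.exp (-(ε * η / 2)) ≠ 0 := Real.exp_ne_zero _
    have hσr : Real.exp (-(ε * η / 2)) * ε * η / 4 +
        κ * η / (8 * Real.exp (-(ε * η / 2)) * ε * Γ)
        = (2 * Real.exp (-(ε * η / 2)) ^ 2 * ε ^ 2 * η * Γ + κ * η) /
            (8 * Real.exp (-(ε * η / 2)) * ε * Γ) := by
      field_simp
      ring
    rw [hσr]
    push_cast [-Complex.ofReal_exp]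
    rw [div_eq_mul_inv]
    have h8 : ((8 : ℂ) * ((Real.exp (-(ε * η / 2)) : ℝ) : ℂ) * (ε : ℂ) * (Γ : ℂ)) ≠ 0 :=
      mul_ne_zero (mul_ne_zero (mul_ne_zero (by norm_num) hA0) hε0) hΓ0
    field_simp
    ring
  -- assemble
  simp only [Dstar]
  rw [hD0, hD1, hD2, hD3, hQ, hP, hRHS]
  ring
end

section
/- Let σ > 0, let f : ℝ → ℝ be a smooth 2π-periodic function that is not identically zero, and let μ ∈ ℝ be such that sin(2θ)·f'(θ) - σ·f''(θ) = μ·f(θ) for all θ ∈ ℝ. Then μ ≥ 0. -/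
/-- Second-derivative test: at a local max of a smooth function, `f'' ≤ 0`. -/
lemma isLocalMax_deriv_deriv_nonpos {f : ℝ → ℝ} (hf : ContDiff ℝ (⊤:ℕ∞) f) {a : ℝ}
    (h : IsLocalMax f a) : deriv (deriv f) a ≤ 0 := by
  by_contra hpos
  push_neg at hpos
  have hf1 : ContDiff ℝ (⊤:ℕ∞) (deriv f) := (contDiff_infty_iff_deriv.mp hf).2
  have hf2 : Continuous (deriv (deriv f)) := (contDiff_infty_iff_deriv.mp hf1).2.continuous
  have hda : deriv f a = 0 := h.deriv_eq_zero
  -- get a ball where f'' > 0 and f ≤ f a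
  have hev : ∀ᶠ x in nhds a, 0 < deriv (deriv f) x ∧ f x ≤ f a := by
    filter_upwards [continuousAt_const.eventually_lt hf2.continuousAt hpos, h] with x h1 h2
    exact ⟨h1, h2⟩
  obtain ⟨δ, hδ, hball⟩ := Metric.eventually_nhds_iff_ball.mp hev
  obtain ⟨b, hab, hbs⟩ : ∃ b, a < b ∧ b < a + δ := ⟨a + δ/2, by linarith, by linarith⟩
  have hsub : Set.Icc a b ⊆ Metric.ball a δ := by
    intro x hx
    obtain ⟨hx1, hx2⟩ := hx
    simp only [Metric.mem_ball, Real.dist_eq, abs_lt]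
    constructor <;> linarith
  -- deriv f > 0 on interior
  have hmono' : StrictMonoOn (deriv f) (Set.Icc a b) := by
    apply strictMonoOn_of_deriv_pos (convex_Icc a b) (hf1.continuous.continuousOn)
    intro x hx
    rw [interior_Icc] at hx
    exact (hball _ (hsub ⟨le_of_lt hx.1, le_of_lt hx.2⟩)).1
  have hmono : StrictMonoOn f (Set.Icc a b) := by
    apply strictMonoOn_of_deriv_pos (convex_Icc a b) (hf.continuous.continuousOn)
    intro x hx
    rw [interior_Icc] at hx
    have := hmono' (Set.left_mem_Icc.mpr hab.le) ⟨hx.1.le, hx.2.le⟩ hx.1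
    rwa [hda] at this
  have h1 : f a < f b := hmono (Set.left_mem_Icc.mpr hab.le) (Set.right_mem_Icc.mpr hab.le) hab
  have h2 : f b ≤ f a := (hball _ (hsub (Set.right_mem_Icc.mpr hab.le))).2
  linarith

lemma isLocalMin_deriv_deriv_nonneg {f : ℝ → ℝ} (hf : ContDiff ℝ (⊤:ℕ∞) f) {a : ℝ}
    (h : IsLocalMin f a) : 0 ≤ deriv (deriv f) a := by
  have hneg := isLocalMax_deriv_deriv_nonpos (f := -f) hf.neg h.neg
  have e1 : deriv (-f) = -(deriv f) := by
    funext x; exact deriv.neg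
  rw [e1] at hneg
  have e2 : deriv (-(deriv f)) a = -(deriv (deriv f) a) := deriv.neg
  rw [e2] at hneg
  linarith

theorem T_sigma_eigenvalues_nonneg (σ : ℝ) (hσ : 0 < σ)
    (f : ℝ → ℝ) (hf : ContDiff ℝ (⊤ : ℕ∞) f)
    (hfp : Function.Periodic f (2 * Real.pi)) (hf0 : f ≠ 0)
    (μ : ℝ)
    (heig : ∀ θ : ℝ, Real.sin (2 * θ) * deriv f θ - σ * deriv (deriv f) θ = μ * f θ) :
    0 ≤ μ := by
  by_contra hμ
  push_neg at hμ
  have hcont : Continuous f := hf.continuous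
  have hper : (0:ℝ) < 2 * Real.pi := by positivity
  -- max on [0, 2π]
  obtain ⟨a, _, ha⟩ := (isCompact_Icc (a := (0:ℝ)) (b := 2 * Real.pi)).exists_isMaxOn
    (Set.nonempty_Icc.mpr (by linarith)) hcont.continuousOn
  obtain ⟨c, _, hc⟩ := (isCompact_Icc (a := (0:ℝ)) (b := 2 * Real.pi)).exists_isMinOn
    (Set.nonempty_Icc.mpr (by linarith)) hcont.continuousOn
  -- global extrema via periodicity
  have key : ∀ y : ℝ, ∃ z ∈ Set.Icc (0:ℝ) (2 * Real.pi), f y = f z := by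
    intro y
    refine ⟨y - ⌊y / (2 * Real.pi)⌋ * (2 * Real.pi), ?_, (hfp.sub_int_mul_eq _).symm⟩
    constructor
    · have := Int.floor_le (y / (2 * Real.pi))
      have h2 : (⌊y / (2 * Real.pi)⌋ : ℝ) * (2 * Real.pi) ≤ y / (2 * Real.pi) * (2 * Real.pi) :=
        mul_le_mul_of_nonneg_right this hper.le
      rw [div_mul_cancel₀ _ hper.ne'] at h2
      linarith
    · have := Int.lt_floor_add_one (y / (2 * Real.pi))
      have h2 : y / (2 * Real.pi) * (2 * Real.pi) < ((⌊y / (2 * Real.pi)⌋ : ℝ) + 1) * (2 * Real.pi) :=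
        mul_lt_mul_of_pos_right this hper
      rw [div_mul_cancel₀ _ hper.ne'] at h2
      nlinarith
  have hamax : ∀ y : ℝ, f y ≤ f a := by
    intro y
    obtain ⟨z, hz, hyz⟩ := key y
    rw [hyz]; exact ha hz
  have hcmin : ∀ y : ℝ, f c ≤ f y := by
    intro y
    obtain ⟨z, hz, hyz⟩ := key y
    rw [hyz]; exact hc hz
  have hla : IsLocalMax f a := Filter.Eventually.of_forall hamax
  have hlc : IsLocalMin f c := Filter.Eventually.of_forall hcmin
  -- second derivative signs
  have hfa2 : deriv (deriv f) a ≤ 0 := isLocalMax_deriv_deriv_nonpos (hf.of_le (by simp)) hla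
  have hfc2 : 0 ≤ deriv (deriv f) c := isLocalMin_deriv_deriv_nonneg (hf.of_le (by simp)) hlc
  have hda : deriv f a = 0 := hla.deriv_eq_zero
  have hdc : deriv f c = 0 := hlc.deriv_eq_zero
  have e1 := heig a
  have e2 := heig c
  rw [hda] at e1
  rw [hdc] at e2
  -- μ * f a = -σ * f'' a ≥ 0, μ * f c ≤ 0
  have hμa : 0 ≤ μ * f a := by nlinarith
  have hμc : μ * f c ≤ 0 := by nlinarith
  have hfa : f a ≤ 0 := nonpos_of_mul_nonneg_right hμa hμ
  have hfc : 0 ≤ f c := nonneg_of_mul_nonpos_right hμc hμ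
  have : f = 0 := by
    funext x
    have h1 := hamax x
    have h2 := hcmin x
    have h3 := hcmin a
    simp only [Pi.zero_apply]
    linarith
  exact hf0 this
end
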